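/- arXiv:0712.1301 — 7 statements merged into one kernel-verified Lean document; each statement's English description precedes it below -/
import Mathlib

section
/- Let G be a graph with m ≥ 9 edges. If the spectral radius μ(G) of the adjacency matrix of G satisfies μ(G) > √m, then G contains a cycle of length 4. -/
/-!
Suppose `G` has no 4-cycle, so any two distinct vertices have at most one common neighbour.
Taking absolute values of an eigenvector for `μ ≥ 0` gives `x ≥ 0` with `A x ≥ μ x`, normalised
so that `max x = x u = 1`. Let `d` be the degree of `u` and `R = ∑_{v ≠ u} c(u, v) x v`, where
`c(u, v) ≤ 1` is the number of common neighbours. Expanding `μ² x u ≤ (A² x) u` gives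
`μ² ≤ d + R`. Applying `A x ≥ μ x` once more to `R`, and using that a neighbour `w` of `u`
already spends the weight `x u = 1` on the edge `wu`, gives `μ R ≤ R + 2m - 2d`.
For `μ ≥ 3` this forces `R ≤ m - d`, hence `μ² ≤ m`.
-/

open Matrix Finset

/-- `μ` is the spectral radius (largest eigenvalue) of the real symmetric matrix `A`. -/
def IsSpecRad {n : ℕ} (A : Matrix (Fin n) (Fin n) ℝ) (μ : ℝ) : Prop :=
  Module.End.HasEigenvalue A.mulVecLin μ ∧
    ∀ ν : ℝ, Module.End.HasEigenvalue A.mulVecLin ν → ν ≤ μ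

/-- `G` contains a cycle of length 4. -/
def Has4Cycle {V : Type*} (G : SimpleGraph V) : Prop :=
  ∃ a b c d : V, G.Adj a b ∧ G.Adj b c ∧ G.Adj c d ∧ G.Adj d a ∧ a ≠ c ∧ b ≠ d

namespace SimpleGraph

variable {V : Type*} [Fintype V] {G : SimpleGraph V} [DecidableRel G.Adj]

section

variable [DecidableEq V]

theorem sum_sum_neighborFinset_inter {M : Type*} [AddCommMonoid M] (S T : Finset V)
    (f : V → M) :
    ∑ w ∈ S, ∑ a ∈ G.neighborFinset w ∩ T, f a = ∑ a ∈ T, #(G.neighborFinset a ∩ S) • f a := by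
  have key := sum_sum_bipartiteAbove_eq_sum_sum_bipartiteBelow G.Adj (s := S) (t := T)
    (fun _ a => f a)
  simp only [sum_const] at key
  convert key using 3 with w - a -
  · ext; simp [bipartiteAbove, and_comm]
  · congr 1; ext; simp [bipartiteBelow, adj_comm, and_comm]

theorem card_neighborFinset_inter_le_one (hG : ¬Has4Cycle G) {u v : V} (huv : u ≠ v) :
    #(G.neighborFinset v ∩ G.neighborFinset u) ≤ 1 := by
  by_contra! hcard
  obtain ⟨a, ha, b, hb, hab⟩ := one_lt_card.mp hcard
  simp only [mem_inter, mem_neighborFinset] at ha hb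
  exact hG ⟨u, a, v, b, ha.2, ha.1.symm, hb.1, hb.2.symm, huv, hab⟩

theorem card_neighborFinset_inter_lt_degree {u w : V} (huw : G.Adj u w) :
    #(G.neighborFinset w ∩ G.neighborFinset u) < G.degree w := by
  rw [← card_neighborFinset_eq_degree]
  refine card_lt_card ((ssubset_iff_of_subset inter_subset_left).2 ⟨u, ?_, ?_⟩)
  · simpa using huw.symm
  · simp

end

structure IsNormalizedSubeigenvector (G : SimpleGraph V) [DecidableRel G.Adj] (μ : ℝ)
    (x : V → ℝ) (u : V) : Prop where
  nonneg : ∀ v, 0 ≤ x v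
  le_one : ∀ v, x v ≤ 1
  apply_eq_one : x u = 1
  mul_le_sum : ∀ v, μ * x v ≤ ∑ a ∈ G.neighborFinset v, x a

theorem exists_isNormalizedSubeigenvector {μ : ℝ}
    (hμ : Module.End.HasEigenvalue (G.adjMatrix ℝ).mulVecLin μ) (hμ0 : 0 ≤ μ) :
    ∃ x u, G.IsNormalizedSubeigenvector μ x u := by
  obtain ⟨y, hy⟩ := hμ.exists_hasEigenvector
  have hAy (v : V) : μ * y v = ∑ a ∈ G.neighborFinset v, y a := by
    simpa [adjMatrix_mulVec_apply] using (congrFun hy.apply_eq_smul v).symm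
  obtain ⟨v₀, hv₀⟩ := Function.ne_iff.mp hy.2
  obtain ⟨u, -, hu⟩ := exists_max_image univ (|y ·|) ⟨v₀, mem_univ _⟩
  have hpos : 0 < |y u| := (abs_pos.2 hv₀).trans_le (hu v₀ (mem_univ _))
  refine ⟨fun v => |y v| / |y u|, u, fun v => by positivity,
    fun v => div_le_one_of_le₀ (hu v (mem_univ v)) hpos.le, div_self hpos.ne', fun v => ?_⟩
  calc μ * (|y v| / |y u|) = |∑ a ∈ G.neighborFinset v, y a| / |y u| := by
        rw [← hAy, abs_mul, abs_of_nonneg hμ0, mul_div_assoc]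
    _ ≤ (∑ a ∈ G.neighborFinset v, |y a|) / |y u| := by gcongr; exact abs_sum_le_sum_abs _ _
    _ = ∑ a ∈ G.neighborFinset v, |y a| / |y u| := sum_div _ _ _

namespace IsNormalizedSubeigenvector

variable {μ c : ℝ} {x : V → ℝ} {u : V}

theorem mul_sum_neighborFinset_le_degree (hx : G.IsNormalizedSubeigenvector μ x u) (v : V)
    (hc0 : 0 ≤ c) (hc1 : c ≤ 1) :
    c * ∑ a ∈ G.neighborFinset v, x a ≤ G.degree v := by
  have hsum : ∑ a ∈ G.neighborFinset v, x a ≤ G.degree v :=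
    calc ∑ a ∈ G.neighborFinset v, x a ≤ ∑ _a ∈ G.neighborFinset v, (1 : ℝ) :=
          sum_le_sum fun a _ => hx.le_one a
      _ = G.degree v := by simp
  nlinarith [sum_nonneg fun a (_ : a ∈ G.neighborFinset v) => hx.nonneg a]

variable [DecidableEq V]

theorem sum_neighborFinset_eq_one_add (hx : G.IsNormalizedSubeigenvector μ x u) {w : V}
    (huw : G.Adj u w) :
    ∑ a ∈ G.neighborFinset w, x a = 1 + ∑ a ∈ G.neighborFinset w ∩ univ.erase u, x a := by
  rw [inter_erase, inter_univ, ← hx.apply_eq_one]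
  exact (add_sum_erase _ _ (by simpa using huw.symm)).symm

theorem mul_sum_neighborFinset_le (hx : G.IsNormalizedSubeigenvector μ x u) {w : V}
    (huw : G.Adj u w) (hc1 : c ≤ 1) :
    c * ∑ a ∈ G.neighborFinset w, x a ≤ c + ∑ a ∈ G.neighborFinset w ∩ univ.erase u, x a := by
  rw [hx.sum_neighborFinset_eq_one_add huw]
  nlinarith [sum_nonneg fun a (_ : a ∈ G.neighborFinset w ∩ univ.erase u) => hx.nonneg a]

theorem sq_le_degree_add_sum_codegree (hx : G.IsNormalizedSubeigenvector μ x u)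
    (hμ : 0 ≤ μ) :
    μ ^ 2 ≤ G.degree u +
      ∑ v ∈ univ.erase u, (#(G.neighborFinset v ∩ G.neighborFinset u) : ℝ) * x v := by
  calc μ ^ 2 = μ * (μ * x u) := by rw [hx.apply_eq_one]; ring
    _ ≤ μ * ∑ w ∈ G.neighborFinset u, x w := by gcongr; exact hx.mul_le_sum u
    _ = ∑ w ∈ G.neighborFinset u, μ * x w := mul_sum _ _ _
    _ ≤ ∑ w ∈ G.neighborFinset u, ∑ a ∈ G.neighborFinset w, x a :=
        sum_le_sum fun w _ => hx.mul_le_sum w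
    _ = ∑ w ∈ G.neighborFinset u, (1 + ∑ a ∈ G.neighborFinset w ∩ univ.erase u, x a) :=
        sum_congr rfl fun w hw =>
          hx.sum_neighborFinset_eq_one_add ((mem_neighborFinset _ _ _).1 hw)
    _ = _ := by
        rw [sum_add_distrib, sum_sum_neighborFinset_inter]
        simp [nsmul_eq_mul]

theorem mul_sum_codegree_le (hG : ¬Has4Cycle G) (hx : G.IsNormalizedSubeigenvector μ x u) :
    μ * ∑ v ∈ univ.erase u, (#(G.neighborFinset v ∩ G.neighborFinset u) : ℝ) * x v ≤
      ∑ v ∈ univ.erase u, (#(G.neighborFinset v ∩ G.neighborFinset u) : ℝ) * x v +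
        2 * #G.edgeFinset - 2 * G.degree u := by
  set F : V → ℝ := fun v => #(G.neighborFinset v ∩ G.neighborFinset u)
  have hF1 : ∀ v ∈ univ.erase u, F v ≤ 1 := fun v hv => by
    simp only [F]
    exact_mod_cast card_neighborFinset_inter_le_one hG (ne_of_mem_erase hv).symm
  have hWsub : G.neighborFinset u ⊆ univ.erase u := fun w hw =>
    mem_erase.2 ⟨(G.ne_of_adj ((mem_neighborFinset _ _ _).1 hw)).symm, mem_univ w⟩
  have hdeg : ∑ v ∈ univ.erase u, (G.degree v : ℝ) = 2 * #G.edgeFinset - G.degree u := by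
    rw [eq_sub_iff_add_eq, sum_erase_add _ _ (mem_univ u)]
    exact_mod_cast G.sum_degrees_eq_twice_card_edges
  calc μ * ∑ v ∈ univ.erase u, F v * x v = ∑ v ∈ univ.erase u, F v * (μ * x v) := by
        rw [mul_sum]; exact sum_congr rfl fun v _ => by ring
    _ ≤ ∑ v ∈ univ.erase u, F v * ∑ a ∈ G.neighborFinset v, x a :=
        sum_le_sum fun v _ => by gcongr; exact hx.mul_le_sum v
    _ = ∑ v ∈ univ.erase u \ G.neighborFinset u, F v * ∑ a ∈ G.neighborFinset v, x a +
          ∑ w ∈ G.neighborFinset u, F w * ∑ a ∈ G.neighborFinset w, x a :=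
        (sum_sdiff hWsub).symm
    _ ≤ ∑ v ∈ univ.erase u \ G.neighborFinset u, (G.degree v : ℝ) +
          ∑ w ∈ G.neighborFinset u,
            (G.degree w - 1 + ∑ a ∈ G.neighborFinset w ∩ univ.erase u, x a) := by
        gcongr with v hv w hw
        · exact hx.mul_sum_neighborFinset_le_degree v (by positivity)
            (hF1 v (sdiff_subset hv))
        · have huw := (mem_neighborFinset _ _ _).1 hw
          have hFw : F w ≤ G.degree w - 1 := by
            have := card_neighborFinset_inter_lt_degree huw
            simp only [F, le_sub_iff_add_le]
            exact_mod_cast this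
          linarith [hx.mul_sum_neighborFinset_le huw (hF1 w (hWsub hw))]
    _ = _ := by
        rw [sum_add_distrib, sum_sub_distrib, ← add_assoc, add_sub_assoc', sum_sdiff hWsub, hdeg,
          sum_sum_neighborFinset_inter]
        simp only [sum_const, card_neighborFinset_eq_degree, nsmul_eq_mul, mul_one]
        ring

end IsNormalizedSubeigenvector

theorem sq_le_card_edgeFinset_of_not_has4Cycle (hG : ¬Has4Cycle G) {μ : ℝ}
    (hμ : Module.End.HasEigenvalue (G.adjMatrix ℝ).mulVecLin μ) (h3 : 3 ≤ μ) :
    μ ^ 2 ≤ #G.edgeFinset := by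
  classical
  obtain ⟨x, u, hx⟩ := exists_isNormalizedSubeigenvector hμ (by linarith)
  have hsq := hx.sq_le_degree_add_sum_codegree (by linarith)
  have hmul := hx.mul_sum_codegree_le hG
  have hR : 0 ≤ ∑ v ∈ univ.erase u, (#(G.neighborFinset v ∩ G.neighborFinset u) : ℝ) * x v :=
    sum_nonneg fun v _ => mul_nonneg (Nat.cast_nonneg _) (hx.nonneg v)
  nlinarith

end SimpleGraph

theorem nosal_C4 (n : ℕ) (G : SimpleGraph (Fin n)) [DecidableRel G.Adj] (μ : ℝ)
    (hm : 9 ≤ G.edgeFinset.card)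
    (hμ : IsSpecRad (G.adjMatrix ℝ) μ)
    (h : μ > Real.sqrt G.edgeFinset.card) :
    Has4Cycle G := by
  by_contra hG
  have h3 : 3 ≤ Real.sqrt G.edgeFinset.card :=
    Real.le_sqrt_of_sq_le (by norm_num; exact_mod_cast hm)
  have hle := G.sq_le_card_edgeFinset_of_not_has4Cycle hG hμ.1 (by linarith)
  have hlt : (G.edgeFinset.card : ℝ) < μ ^ 2 := (Real.sqrt_lt' (by linarith)).1 h
  linarith
end

section
/- Let G be a graph with m edges and spectral radius μ(G) > √m. Then G contains a triangle. -/
open Matrix Finset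

/-- In a triangle-free graph, the sum of degrees over a neighborhood is at most `m`. -/
lemma neighborhood_degree_sum {n : ℕ} (G : SimpleGraph (Fin n)) [DecidableRel G.Adj]
    (htf : ¬ ∃ x y z : Fin n, G.Adj x y ∧ G.Adj y z ∧ G.Adj x z) (i : Fin n) :
    ∑ k ∈ G.neighborFinset i, G.degree k ≤ G.edgeFinset.card := by
  have hdeg : ∀ k, G.degree k = (G.edgeFinset.filter (fun e => k ∈ e)).card := by
    intro k
    rw [← SimpleGraph.card_incidenceFinset_eq_degree, SimpleGraph.incidenceFinset_eq_filter]
  calc ∑ k ∈ G.neighborFinset i, G.degree k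
      = ∑ k ∈ G.neighborFinset i, ∑ e ∈ G.edgeFinset, (if k ∈ e then 1 else 0) := by
        simp_rw [hdeg, Finset.card_filter]
    _ = ∑ e ∈ G.edgeFinset, ∑ k ∈ G.neighborFinset i, (if k ∈ e then 1 else 0) :=
        Finset.sum_comm
    _ = ∑ e ∈ G.edgeFinset, ((G.neighborFinset i).filter (fun k => k ∈ e)).card := by
        simp_rw [Finset.card_filter]
    _ ≤ ∑ e ∈ G.edgeFinset, 1 := by
        apply Finset.sum_le_sum
        intro e he
        rw [SimpleGraph.mem_edgeFinset] at he
        apply Finset.card_le_one.2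
        intro a ha b hb
        simp only [Finset.mem_filter, SimpleGraph.mem_neighborFinset] at ha hb
        by_contra hab
        induction e with
        | _ u v =>
          have hadj : G.Adj u v := he
          have ha' := ha.2; have hb' := hb.2
          rw [Sym2.mem_iff] at ha' hb'
          apply htf
          rcases ha' with rfl | rfl <;> rcases hb' with rfl | rfl
          · exact absurd rfl hab
          · exact ⟨i, a, b, ha.1, hadj, hb.1⟩
          · exact ⟨i, a, b, ha.1, hadj.symm, hb.1⟩
          · exact absurd rfl hab
    _ = G.edgeFinset.card := by simp

theorem nosal_triangle (n : ℕ) (G : SimpleGraph (Fin n)) [DecidableRel G.Adj] (μ : ℝ)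
    (hμ : IsSpecRad (G.adjMatrix ℝ) μ)
    (h : μ > Real.sqrt G.edgeFinset.card) :
    ∃ x y z : Fin n, G.Adj x y ∧ G.Adj y z ∧ G.Adj x z := by
  by_contra htf
  set A := G.adjMatrix ℝ
  set m : ℝ := (G.edgeFinset.card : ℝ)
  -- get an eigenvector
  obtain ⟨x, hx⟩ := hμ.1.exists_hasEigenvector
  have hxne : x ≠ 0 := hx.right
  have hAx : A.mulVec x = μ • x := hx.apply_eq_smul
  -- A² x = μ² x
  have hA2x : (A * A).mulVec x = (μ^2) • x := by
    rw [← Matrix.mulVec_mulVec, hAx, Matrix.mulVec_smul, hAx, smul_smul, sq]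
  -- pick i maximizing |x i|
  have hn : (Finset.univ : Finset (Fin n)).Nonempty := by
    by_contra hemp
    rw [Finset.not_nonempty_iff_eq_empty] at hemp
    apply hxne
    funext j
    exact absurd (Finset.mem_univ j) (by simp [hemp])
  obtain ⟨i, -, hi⟩ := Finset.exists_max_image Finset.univ (fun j => |x j|) hn
  have hxi : 0 < |x i| := by
    rcases Function.ne_iff.1 hxne with ⟨j, hj⟩
    exact lt_of_lt_of_le (abs_pos.2 hj) (hi j (Finset.mem_univ j))
  -- nonnegativity of A² entries
  have hA2nn : ∀ j, 0 ≤ (A * A) i j := by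
    intro j
    rw [Matrix.mul_apply]
    refine Finset.sum_nonneg fun k _ => mul_nonneg ?_ ?_ <;>
      · simp only [A, SimpleGraph.adjMatrix_apply]
        split_ifs <;> norm_num
  -- row sum bound
  have hrow2 : ∑ j, (A * A) i j ≤ m := by
    have e1 : ∑ j, (A * A) i j = ∑ k ∈ G.neighborFinset i, (G.degree k : ℝ) := by
      simp_rw [Matrix.mul_apply]
      rw [Finset.sum_comm]
      have e2 : ∀ k, ∑ j, A i k * A k j = A i k * (G.degree k : ℝ) := by
        intro k
        rw [← Finset.mul_sum]
        congr 1
        have : ∑ j, A k j = dotProduct (A k) (fun _ => (1:ℝ)) := by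
          simp [dotProduct]
        rw [this]
        have := SimpleGraph.adjMatrix_dotProduct (α := ℝ) G k (fun _ => (1:ℝ))
        rw [this, Finset.sum_const, SimpleGraph.degree]
        simp
      simp_rw [e2]
      have : ∑ k, A i k * (G.degree k : ℝ)
          = dotProduct (A i) (fun k => (G.degree k : ℝ)) := by
        simp [dotProduct]
      rw [this, SimpleGraph.adjMatrix_dotProduct]
    rw [e1]
    have := neighborhood_degree_sum G htf i
    calc ∑ k ∈ G.neighborFinset i, (G.degree k : ℝ)
        = ((∑ k ∈ G.neighborFinset i, G.degree k : ℕ) : ℝ) := by push_cast; ring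
      _ ≤ m := by
          show _ ≤ ((G.edgeFinset.card : ℕ) : ℝ)
          exact_mod_cast this
  -- main estimate
  have key : μ^2 * |x i| ≤ m * |x i| := by
    have h1 : |((A * A).mulVec x) i| = μ^2 * |x i| := by
      rw [hA2x]
      simp [abs_mul, abs_of_nonneg (sq_nonneg μ), Pi.smul_apply, smul_eq_mul]
    have h2 : |((A * A).mulVec x) i| ≤ ∑ j, (A * A) i j * |x j| := by
      rw [Matrix.mulVec, dotProduct]
      refine (Finset.abs_sum_le_sum_abs _ _).trans (Finset.sum_le_sum fun j _ => ?_)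
      rw [abs_mul, abs_of_nonneg (hA2nn j)]
    have h3 : ∑ j, (A * A) i j * |x j| ≤ ∑ j, (A * A) i j * |x i| := by
      apply Finset.sum_le_sum
      intro j _
      exact mul_le_mul_of_nonneg_left (hi j (Finset.mem_univ j)) (hA2nn j)
    have h4 : ∑ j, (A * A) i j * |x i| ≤ m * |x i| := by
      rw [← Finset.sum_mul]
      exact mul_le_mul_of_nonneg_right hrow2 (abs_nonneg _)
    linarith [h1 ▸ h2]
  have hμ2 : μ^2 ≤ m := le_of_mul_le_mul_right (by linarith) hxi
  have : |μ| ≤ Real.sqrt m := Real.abs_le_sqrt hμ2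
  have : μ ≤ Real.sqrt m := (le_abs_self μ).trans this
  exact absurd h (not_lt.2 this)
end

section
/- Let x be a unit eigenvector corresponding to the spectral radius of a graph G with at least one edge. Then every entry of x satisfies |x_i| ≤ 2^{-1/2}. -/
/-!
The vertex star at `i`, used as a test vector in the Rayleigh quotient, shows `μ ≥ √(deg i)`.
Cauchy–Schwarz applied to the eigenvalue equation `μ xᵢ = ∑_{j ~ i} xⱼ` then gives
`μ² xᵢ² ≤ deg i · (1 - xᵢ²) ≤ μ² (1 - xᵢ²)`, and `μ > 0` because `G` has an edge.
-/

open Matrix Finset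

namespace Matrix

variable {ι : Type*} [Fintype ι] [DecidableEq ι] {A : Matrix ι ι ℝ} {μ : ℝ}

open scoped Pointwise in
theorem IsHermitian.posSemidef_algebraMap_sub (hA : A.IsHermitian)
    (hμ : ∀ ν, Module.End.HasEigenvalue A.mulVecLin ν → ν ≤ μ) :
    (algebraMap ℝ (Matrix ι ι ℝ) μ - A).PosSemidef := by
  have hB : (algebraMap ℝ (Matrix ι ι ℝ) μ - A).IsHermitian :=
    (IsSelfAdjoint.algebraMap _ (.all μ)).sub hA
  rw [hB.posSemidef_iff_eigenvalues_nonneg]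
  intro j
  obtain ⟨μ', rfl, ν, hν, hj⟩ : hB.eigenvalues j ∈ {μ} - spectrum ℝ A := by
    rw [spectrum.singleton_sub_eq]
    exact hB.eigenvalues_mem_spectrum_real j
  rw [← spectrum_toLin', ← Module.End.hasEigenvalue_iff_mem_spectrum] at hν
  simpa [← hj] using hμ ν hν

theorem IsHermitian.dotProduct_mulVec_le (hA : A.IsHermitian)
    (hμ : ∀ ν, Module.End.HasEigenvalue A.mulVecLin ν → ν ≤ μ) (v : ι → ℝ) :
    v ⬝ᵥ A *ᵥ v ≤ μ * (v ⬝ᵥ v) := by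
  have := (hA.posSemidef_algebraMap_sub hμ).dotProduct_mulVec_nonneg v
  rwa [star_trivial, sub_mulVec, dotProduct_sub, Algebra.algebraMap_eq_smul_one, smul_mulVec,
    one_mulVec, dotProduct_smul, smul_eq_mul, sub_nonneg] at this

end Matrix

namespace SimpleGraph

variable {V : Type*} [Fintype V] (G : SimpleGraph V) [DecidableRel G.Adj] {μ : ℝ}

theorem two_mul_mul_degree_le [DecidableEq V]
    (hμ : ∀ ν, Module.End.HasEigenvalue (G.adjMatrix ℝ).mulVecLin ν → ν ≤ μ) (i : V) (t : ℝ) :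
    2 * t * G.degree i ≤ μ * (t ^ 2 + G.degree i) := by
  have hcol : G.adjMatrix ℝ *ᵥ Pi.single i 1 = G.adjMatrix ℝ i := by
    ext j; simp [adjMatrix_apply, adj_comm]
  have hdiag : G.adjMatrix ℝ i i = 0 := by simp
  have hrow_sq : G.adjMatrix ℝ i ⬝ᵥ G.adjMatrix ℝ i = G.degree i := by
    simp [filter_true_of_mem, mem_neighborFinset]
  have hrow_mul : (G.adjMatrix ℝ *ᵥ G.adjMatrix ℝ i) i = G.degree i := by
    simp [filter_true_of_mem, mem_neighborFinset]
  have hrow_quad : 0 ≤ G.adjMatrix ℝ i ⬝ᵥ G.adjMatrix ℝ *ᵥ G.adjMatrix ℝ i := by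
    rw [dotProduct_mulVec_adjMatrix]
    exact sum_nonneg fun _ _ => sum_nonneg fun _ _ => by simp only [adjMatrix_apply]; positivity
  have hrayleigh :=
    (G.isHermitian_adjMatrix ℝ).dotProduct_mulVec_le hμ (t • Pi.single i 1 + G.adjMatrix ℝ i)
  simp only [mulVec_add, mulVec_smul, hcol, dotProduct_add, add_dotProduct, dotProduct_smul,
    smul_dotProduct, single_dotProduct, dotProduct_single, hdiag, hrow_sq, hrow_mul, smul_eq_mul,
    Pi.add_apply, Pi.smul_apply, Pi.single_eq_same] at hrayleigh
  nlinarith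

theorem sqrt_degree_le [DecidableEq V]
    (hμ : ∀ ν, Module.End.HasEigenvalue (G.adjMatrix ℝ).mulVecLin ν → ν ≤ μ) (i : V) :
    √(G.degree i) ≤ μ := by
  rcases (Nat.cast_nonneg (α := ℝ) (G.degree i)).eq_or_lt with hd | hd
  · have := G.two_mul_mul_degree_le hμ i 1
    rw [← hd] at this ⊢
    rw [Real.sqrt_zero]
    linarith
  · have := G.two_mul_mul_degree_le hμ i √(G.degree i)
    rw [Real.sq_sqrt hd.le] at this
    nlinarith

theorem sq_mul_le_degree_mul_sum_sq {x : V → ℝ} (hx : G.adjMatrix ℝ *ᵥ x = μ • x) (i : V) :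
    (μ * x i) ^ 2 ≤ G.degree i * ∑ j ∈ G.neighborFinset i, x j ^ 2 := by
  have : μ * x i = ∑ j ∈ G.neighborFinset i, x j := by simpa using (congrFun hx i).symm
  rw [this, ← card_neighborFinset_eq_degree]
  exact sq_sum_le_card_mul_sum_sq

theorem sum_neighborFinset_add_le [DecidableEq V] {f : V → ℝ} (hf : ∀ j, 0 ≤ f j) (i : V) :
    ∑ j ∈ G.neighborFinset i, f j + f i ≤ ∑ j, f j := by
  rw [add_comm, ← sum_insert (G.notMem_neighborFinset_self i)]
  exact sum_le_univ_sum_of_nonneg hf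

end SimpleGraph

theorem entry_bound (n : ℕ) (G : SimpleGraph (Fin n)) [DecidableRel G.Adj] (μ : ℝ)
    (hedge : G.edgeFinset.Nonempty)
    (hμ : IsSpecRad (G.adjMatrix ℝ) μ)
    (x : Fin n → ℝ)
    (hx : (G.adjMatrix ℝ).mulVec x = μ • x)
    (hunit : ∑ i, (x i) ^ 2 = 1) :
    ∀ i, |x i| ≤ 1 / Real.sqrt 2 := by
  intro i
  obtain ⟨⟨a, b⟩, hab⟩ := hedge
  rw [SimpleGraph.mem_edgeFinset, SimpleGraph.mem_edgeSet] at hab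
  have hμ_pos : 0 < μ := by
    have : (0 : ℝ) < √(G.degree a) :=
      Real.sqrt_pos.2 (Nat.cast_pos.2 (G.degree_pos_iff_exists_adj a |>.2 ⟨b, hab⟩))
    exact this.trans_le (G.sqrt_degree_le hμ.2 a)
  have hdeg : (G.degree i : ℝ) ≤ μ ^ 2 := (Real.sqrt_le_iff.1 (G.sqrt_degree_le hμ.2 i)).2
  have hrest := G.sum_neighborFinset_add_le (fun j => sq_nonneg (x j)) i
  rw [hunit] at hrest
  have hnbr_nonneg : 0 ≤ ∑ j ∈ G.neighborFinset i, x j ^ 2 := sum_nonneg fun j _ => sq_nonneg _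
  have : μ ^ 2 * x i ^ 2 ≤ μ ^ 2 * (1 - x i ^ 2) := calc
    μ ^ 2 * x i ^ 2 = (μ * x i) ^ 2 := by ring
    _ ≤ G.degree i * ∑ j ∈ G.neighborFinset i, x j ^ 2 := G.sq_mul_le_degree_mul_sum_sq hx i
    _ ≤ μ ^ 2 * ∑ j ∈ G.neighborFinset i, x j ^ 2 := by gcongr
    _ ≤ μ ^ 2 * (1 - x i ^ 2) := by gcongr; linarith
  have hsq : x i ^ 2 ≤ 1 / 2 := by
    have := le_of_mul_le_mul_left this (by positivity)
    linarith
  calc |x i| ≤ √(1 / 2) := Real.abs_le_sqrt hsq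
    _ = 1 / √2 := by rw [Real.sqrt_div' _ zero_le_two, Real.sqrt_one]
end

section
/- Let S_{n,k} be the star of order n with k disjoint edges added within its independent set, where k ≥ 1 and 2k ≤ n−1. If n − 1 + k ≥ 9, then the spectral radius of S_{n,k} satisfies μ(S_{n,k}) ≤ √(n−1+k). -/
/-!
Let `v` be an eigenvector for an eigenvalue `μ > 1`, with centre value `v 0`. The eigen-equations
at a pendant vertex and at the two ends of an added edge (which are twins, so agree as `μ ≠ -1`)
force the values `v 0 / μ` and `v 0 / (μ - 1)`; hence `v 0 ≠ 0`, and the equation at the centre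
becomes `μ² (μ - 1) = (n - 1)(μ - 1) + 2k`. For `μ ≥ 3` we have `2k ≤ k (μ - 1)`, so `μ² ≤ n - 1 + k`.
-/

open Matrix Finset

/-- The star of order `n` (dominating vertex `0`) with `k` disjoint extra edges
`{1,2}, {3,4}, …, {2k-1, 2k}` inside its independent set. -/
def SnK (n k : ℕ) : SimpleGraph (Fin n) :=
  SimpleGraph.fromRel (fun a b =>
    a.val = 0 ∨ ∃ i, i < k ∧ a.val = 2 * i + 1 ∧ b.val = 2 * i + 2)

noncomputable instance (n k : ℕ) : DecidableRel (SnK n k).Adj :=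
  Classical.decRel _

namespace SimpleGraph

variable {V : Type*} [Fintype V] {G : SimpleGraph V} [DecidableRel G.Adj] {μ : ℝ} {v : V → ℝ}

theorem sum_neighborFinset_eq_of_mulVec_eq_smul (hv : G.adjMatrix ℝ *ᵥ v = μ • v) (x : V) :
    ∑ u ∈ G.neighborFinset x, v u = μ * v x := by
  rw [← adjMatrix_mulVec_apply, hv, Pi.smul_apply, smul_eq_mul]

theorem mul_apply_eq_of_neighborFinset_eq_singleton (hv : G.adjMatrix ℝ *ᵥ v = μ • v)
    {x c : V} (hx : G.neighborFinset x = {c}) : μ * v x = v c := by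
  rw [← sum_neighborFinset_eq_of_mulVec_eq_smul hv, hx, sum_singleton]

theorem sub_one_mul_apply_eq_of_neighborFinset_eq_pair [DecidableEq V]
    (hv : G.adjMatrix ℝ *ᵥ v = μ • v) (hμ : μ ≠ -1) {x y c : V} (hx : G.neighborFinset x = {c, y})
    (hy : G.neighborFinset y = {c, x}) : (μ - 1) * v x = v c := by
  have hcx : c ≠ x := ((G.mem_neighborFinset x c).1 (by simp [hx])).ne'
  have hcy : c ≠ y := ((G.mem_neighborFinset y c).1 (by simp [hy])).ne'
  have hx' := sum_neighborFinset_eq_of_mulVec_eq_smul hv x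
  have hy' := sum_neighborFinset_eq_of_mulVec_eq_smul hv y
  rw [hx, sum_pair hcy] at hx'
  rw [hy, sum_pair hcx] at hy'
  have hxy : v x = v y := by
    have h : (μ + 1) * (v x - v y) = 0 := by linear_combination hy' - hx'
    rcases mul_eq_zero.1 h with h | h
    · exact absurd (eq_neg_of_add_eq_zero_left h) hμ
    · linarith
  linear_combination -hx' - hxy

end SimpleGraph

theorem Fin.sum_eq_of_eq_on_blocks {n k : ℕ} [NeZero n] (hk : 2 * k + 1 ≤ n) (f : Fin n → ℝ)
    {c d : ℝ} (hc : ∀ j : Fin n, 1 ≤ j.val → j.val ≤ 2 * k → f j = c)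
    (hd : ∀ j : Fin n, 2 * k + 1 ≤ j.val → f j = d) :
    ∑ j, f j = f 0 + 2 * k * c + ((n : ℝ) - 1 - 2 * k) * d := by
  obtain ⟨r, rfl⟩ := Nat.exists_eq_add_of_le hk
  rw [Fin.sum_univ_add, Fin.sum_univ_succ]
  have hc' : ∀ i : Fin (2 * k), f (Fin.castAdd r i.succ) = c := fun i =>
    hc _ (by simp) (by simp [Nat.succ_le_of_lt i.isLt])
  have hd' : ∀ i : Fin r, f (Fin.natAdd (2 * k + 1) i) = d := fun i => hd _ (by simp)
  simp only [hc', hd', sum_const, nsmul_eq_mul]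
  have h0 : Fin.castAdd r (0 : Fin (2 * k + 1)) = 0 := Fin.ext (by simp)
  rw [h0]
  push_cast
  ring

theorem SnK_adj_iff {n k : ℕ} {a b : Fin n} :
    (SnK n k).Adj a b ↔ a ≠ b ∧ (a.val = 0 ∨ b.val = 0 ∨
      (a.val % 2 = 1 ∧ a.val < 2 * k ∧ b.val = a.val + 1) ∨
      (b.val % 2 = 1 ∧ b.val < 2 * k ∧ a.val = b.val + 1)) := by
  simp only [SnK, SimpleGraph.fromRel_adj]
  refine and_congr_right fun _ => ?_
  constructor
  · rintro ((h | ⟨i, hi, ha, hb⟩) | (h | ⟨i, hi, hb, ha⟩)) <;> omega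
  · rintro (h | h | ⟨ha, hak, hb⟩ | ⟨hb, hbk, ha⟩)
    · exact Or.inl (Or.inl h)
    · exact Or.inr (Or.inl h)
    · exact Or.inl (Or.inr ⟨a.val / 2, by omega, by omega, by omega⟩)
    · exact Or.inr (Or.inr ⟨b.val / 2, by omega, by omega, by omega⟩)

section SnK

variable {n k : ℕ} [NeZero n]

theorem SnK_neighborFinset_zero : (SnK n k).neighborFinset 0 = univ.erase 0 := by
  ext b
  simp only [SimpleGraph.mem_neighborFinset, SnK_adj_iff, mem_erase, mem_univ, and_true,
    ne_eq, Fin.ext_iff, Fin.coe_ofNat_eq_mod, Nat.zero_mod, true_or, and_true]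
  exact ⟨Ne.symm, Ne.symm⟩

theorem SnK_neighborFinset_of_two_mul_lt {j : Fin n} (hj : 2 * k < j.val) :
    (SnK n k).neighborFinset j = {0} := by
  ext b
  simp only [SimpleGraph.mem_neighborFinset, SnK_adj_iff, mem_singleton, Fin.ext_iff,
    Fin.coe_ofNat_eq_mod, Nat.zero_mod]
  omega

theorem SnK_exists_neighborFinset_eq_pair (hk : 2 * k + 1 ≤ n) {j : Fin n} (h1 : 1 ≤ j.val)
    (h2 : j.val ≤ 2 * k) : ∃ j' : Fin n,
      (SnK n k).neighborFinset j = {0, j'} ∧ (SnK n k).neighborFinset j' = {0, j} := by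
  obtain ⟨j', hj'⟩ : ∃ j' : Fin n, j'.val = if j.val % 2 = 1 then j.val + 1 else j.val - 1 :=
    ⟨⟨if j.val % 2 = 1 then j.val + 1 else j.val - 1, by split_ifs <;> omega⟩, rfl⟩
  refine ⟨j', ?_, ?_⟩ <;>
  · ext b
    simp only [SimpleGraph.mem_neighborFinset, SnK_adj_iff, mem_insert, mem_singleton,
      Fin.ext_iff, Fin.coe_ofNat_eq_mod, Nat.zero_mod]
    split_ifs at hj' <;> omega

theorem SnK_cubic_of_hasEigenvalue (hk : 2 * k + 1 ≤ n) {μ : ℝ} (hμ : 1 < μ)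
    (h : Module.End.HasEigenvalue ((SnK n k).adjMatrix ℝ).mulVecLin μ) :
    μ ^ 2 * (μ - 1) = ((n : ℝ) - 1) * (μ - 1) + 2 * k := by
  obtain ⟨v, hv⟩ := h.exists_hasEigenvector
  have hAv : (SnK n k).adjMatrix ℝ *ᵥ v = μ • v := hv.apply_eq_smul
  have hμ0 : μ ≠ 0 := by linarith
  have hμ1 : μ - 1 ≠ 0 := by linarith
  have hpair : ∀ j : Fin n, 1 ≤ j.val → j.val ≤ 2 * k → v j = v 0 / (μ - 1) := by
    intro j h1 h2
    obtain ⟨j', hj, hj'⟩ := SnK_exists_neighborFinset_eq_pair hk h1 h2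
    rw [eq_div_iff hμ1, mul_comm]
    exact SimpleGraph.sub_one_mul_apply_eq_of_neighborFinset_eq_pair hAv (by linarith) hj hj'
  have hpendant : ∀ j : Fin n, 2 * k + 1 ≤ j.val → v j = v 0 / μ := by
    intro j hj
    rw [eq_div_iff hμ0, mul_comm]
    exact SimpleGraph.mul_apply_eq_of_neighborFinset_eq_singleton hAv
      (SnK_neighborFinset_of_two_mul_lt hj)
  have hcenter : ∑ j, v j - v 0 = μ * v 0 := by
    rw [← sum_erase_eq_sub (mem_univ 0), ← SnK_neighborFinset_zero]
    exact SimpleGraph.sum_neighborFinset_eq_of_mulVec_eq_smul hAv 0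
  have ha : v 0 ≠ 0 := by
    intro ha
    refine hv.2 (funext fun j => ?_)
    rcases Nat.eq_zero_or_pos j.val with h0 | h1
    · rw [show j = 0 from Fin.ext h0]
      exact ha
    · rcases le_or_gt j.val (2 * k) with h2 | h2
      · simp [hpair j h1 h2, ha]
      · simp [hpendant j h2, ha]
  rw [Fin.sum_eq_of_eq_on_blocks hk v hpair hpendant] at hcenter
  field_simp at hcenter
  linear_combination -hcenter

end SnK

theorem sq_le_of_sq_mul_sub_one_eq {μ m k : ℝ} (hμ : 3 ≤ μ) (hk : 0 ≤ k)
    (h : μ ^ 2 * (μ - 1) = m * (μ - 1) + 2 * k) : μ ^ 2 ≤ m + k := by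
  nlinarith

theorem SnK_upper_general (n k : ℕ) (hk : 2 * k + 1 ≤ n) (h9 : 9 ≤ n - 1 + k) (μ : ℝ)
    (hμ : IsSpecRad ((SnK n k).adjMatrix ℝ) μ) :
    μ ≤ Real.sqrt ((n : ℝ) - 1 + k) := by
  have h9' : (9 : ℝ) ≤ (n : ℝ) - 1 + k := by
    have : ((9 : ℕ) : ℝ) ≤ ((n - 1 + k : ℕ) : ℝ) := by exact_mod_cast h9
    push_cast [Nat.cast_sub (by omega : 1 ≤ n)] at this
    linarith
  rcases lt_or_ge μ 3 with h3 | h3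
  · exact h3.le.trans (Real.le_sqrt_of_sq_le (by linarith))
  · have : NeZero n := ⟨by omega⟩
    have hcubic := SnK_cubic_of_hasEigenvalue hk (by linarith) hμ.1
    exact Real.le_sqrt_of_sq_le (sq_le_of_sq_mul_sub_one_eq h3 k.cast_nonneg hcubic)

theorem SnK_upper (n k : ℕ) (hk1 : 1 ≤ k) (hk : 2 * k + 1 ≤ n) (h9 : 9 ≤ n - 1 + k) (μ : ℝ)
    (hμ : IsSpecRad ((SnK n k).adjMatrix ℝ) μ) :
    μ ≤ Real.sqrt ((n : ℝ) - 1 + k) :=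
  SnK_upper_general n k hk h9 μ hμ
end

section
/- Let G be a graph with spectral radius μ and a positive unit eigenvector x to μ. If uv is an edge of G with d(u) = d(v) = 2 and μ² ≥ 14, then x_u·x_v < 1/(4μ). -/
open Matrix Finset

/-!
Writing `a` and `b` for the other neighbours of `u` and `v` (possibly `a = b`), the eigenvalue
equations at `u` and `v` add up to `x a + x b = (μ - 1) (x u + x v)`. Every coordinate of a
nonnegative unit eigenvector satisfies `x a ^ 2 ≤ 1 / 2`: each neighbour `w` of `a` has
`x a ≤ μ x w`, so `μ x a ^ 2 = x a ∑_{w ~ a} x w ≤ μ ∑_{w ~ a} x w ^ 2`. Hence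
`(μ - 1) ^ 2 (x u + x v) ^ 2 ≤ 2`, and `μ ^ 2 ≥ 14` forces `(μ - 1) ^ 2 > 2 μ`.
-/

namespace SimpleGraph

variable {V : Type*} [Fintype V] {G : SimpleGraph V} [DecidableRel G.Adj] {x : V → ℝ} {μ : ℝ}

theorem sum_neighborFinset_eq_of_adjMatrix_mulVec_eq
    (hx : (G.adjMatrix ℝ).mulVec x = μ • x) (i : V) :
    ∑ j ∈ G.neighborFinset i, x j = μ * x i := by
  simpa [adjMatrix_mulVec_apply] using congrFun hx i

theorem le_mul_of_adj_of_adjMatrix_mulVec_eq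
    (hx : (G.adjMatrix ℝ).mulVec x = μ • x) (hnn : ∀ i, 0 ≤ x i) {a w : V} (h : G.Adj w a) :
    x a ≤ μ * x w := by
  rw [← sum_neighborFinset_eq_of_adjMatrix_mulVec_eq hx w]
  exact single_le_sum (fun i _ => hnn i) ((G.mem_neighborFinset w a).mpr h)

theorem sq_le_sum_neighborFinset_sq
    (hx : (G.adjMatrix ℝ).mulVec x = μ • x) (hnn : ∀ i, 0 ≤ x i) (hμ : 0 < μ) (a : V) :
    x a ^ 2 ≤ ∑ w ∈ G.neighborFinset a, x w ^ 2 := by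
  refine le_of_mul_le_mul_left ?_ hμ
  calc μ * x a ^ 2 = ∑ w ∈ G.neighborFinset a, x a * x w := by
        rw [← mul_sum, sum_neighborFinset_eq_of_adjMatrix_mulVec_eq hx a]; ring
    _ ≤ ∑ w ∈ G.neighborFinset a, μ * x w * x w := by
        refine sum_le_sum fun w hw => mul_le_mul_of_nonneg_right ?_ (hnn w)
        exact le_mul_of_adj_of_adjMatrix_mulVec_eq hx hnn ((G.mem_neighborFinset a w).mp hw).symm
    _ = μ * ∑ w ∈ G.neighborFinset a, x w ^ 2 := by rw [mul_sum]; ring_nf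

theorem sq_le_half_of_adjMatrix_mulVec_eq
    (hx : (G.adjMatrix ℝ).mulVec x = μ • x) (hnn : ∀ i, 0 ≤ x i) (hμ : 0 < μ)
    (hunit : ∑ i, x i ^ 2 = 1) (a : V) :
    x a ^ 2 ≤ 1 / 2 := by
  classical
  have hle : x a ^ 2 + ∑ w ∈ G.neighborFinset a, x w ^ 2 ≤ 1 := by
    rw [← sum_insert (f := fun i => x i ^ 2) (G.notMem_neighborFinset_self a), ← hunit]
    exact sum_le_univ_sum_of_nonneg fun i => sq_nonneg (x i)
  linarith [sq_le_sum_neighborFinset_sq hx hnn hμ a]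

theorem exists_neighborFinset_eq_pair [DecidableEq V] {u v : V} (hd : G.degree u = 2)
    (h : G.Adj u v) : ∃ a, a ≠ v ∧ G.neighborFinset u = {v, a} := by
  obtain ⟨p, q, hpq, hN⟩ := card_eq_two.mp (hd ▸ G.card_neighborFinset_eq_degree u)
  have hv : v ∈ G.neighborFinset u := (G.mem_neighborFinset u v).mpr h
  rw [hN, mem_insert, mem_singleton] at hv
  rcases hv with rfl | rfl
  · exact ⟨q, hpq.symm, hN⟩
  · exact ⟨p, hpq, by rw [hN, pair_comm]⟩

end SimpleGraph

theorem mul_lt_one_div_of_add_eq_sub_one_mul {μ p q r s : ℝ} (hμ : 0 < μ) (hμ2 : μ ^ 2 ≥ 14)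
    (h : r + s = (μ - 1) * (p + q)) (hr : r ^ 2 ≤ 1 / 2) (hs : s ^ 2 ≤ 1 / 2) :
    p * q < 1 / (4 * μ) := by
  rw [lt_div_iff₀ (by positivity)]
  have hgap : 2 * μ < (μ - 1) ^ 2 := by nlinarith
  have hsum : (μ - 1) ^ 2 * (p + q) ^ 2 ≤ 2 := by
    nlinarith [sq_nonneg (r - s), congrArg (· ^ 2) h]
  have hamgm : 4 * (p * q) ≤ (p + q) ^ 2 := by nlinarith [sq_nonneg (p - q)]
  rcases le_or_gt (p * q) 0 with hpq | hpq
  · nlinarith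
  · nlinarith [mul_lt_mul_of_pos_left hgap hpq, mul_le_mul_of_nonneg_left hamgm (sq_nonneg (μ - 1))]

theorem claim1_general (n : ℕ) (G : SimpleGraph (Fin n)) [DecidableRel G.Adj] (μ : ℝ)
    (x : Fin n → ℝ) (hpos : ∀ i, 0 < x i)
    (hx : (G.adjMatrix ℝ).mulVec x = μ • x)
    (hunit : ∑ i, (x i) ^ 2 = 1)
    (u v : Fin n) (huv : G.Adj u v)
    (hdu : G.degree u = 2) (hdv : G.degree v = 2)
    (hμ2 : μ ^ 2 ≥ 14) :
    x u * x v < 1 / (4 * μ) := by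
  have hsum := G.sum_neighborFinset_eq_of_adjMatrix_mulVec_eq hx
  obtain ⟨a, hav, hNu⟩ := G.exists_neighborFinset_eq_pair hdu huv
  obtain ⟨b, hbu, hNv⟩ := G.exists_neighborFinset_eq_pair hdv huv.symm
  have hu : x v + x a = μ * x u := by rw [← hsum u, hNu, sum_pair hav.symm]
  have hv : x u + x b = μ * x v := by rw [← hsum v, hNv, sum_pair hbu.symm]
  have hμ : 0 < μ := pos_of_mul_pos_left (hu ▸ add_pos (hpos v) (hpos a)) (hpos u).le
  have hnn : ∀ i, 0 ≤ x i := fun i => (hpos i).le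
  exact mul_lt_one_div_of_add_eq_sub_one_mul hμ hμ2 (by linarith)
    (G.sq_le_half_of_adjMatrix_mulVec_eq hx hnn hμ hunit a)
    (G.sq_le_half_of_adjMatrix_mulVec_eq hx hnn hμ hunit b)

theorem claim1 (n : ℕ) (G : SimpleGraph (Fin n)) [DecidableRel G.Adj] (μ : ℝ)
    (hμ : IsSpecRad (G.adjMatrix ℝ) μ)
    (x : Fin n → ℝ) (hpos : ∀ i, 0 < x i)
    (hx : (G.adjMatrix ℝ).mulVec x = μ • x)
    (hunit : ∑ i, (x i) ^ 2 = 1)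
    (u v : Fin n) (huv : G.Adj u v)
    (hdu : G.degree u = 2) (hdv : G.degree v = 2)
    (hμ2 : μ ^ 2 ≥ 14) :
    x u * x v < 1 / (4 * μ) :=
  claim1_general n G μ x hpos hx hunit u v huv hdu hdv hμ2
end

section
/- Let G be a graph with spectral radius μ and positive unit eigenvector x to μ. If uv ∈ E(G) satisfies x_u·x_v ≤ 1/(4μ), then the spectral radius of G − uv satisfies μ(G − uv)² > μ² − 1. -/
/-!
Deleting `uv` changes the quadratic form of the adjacency matrix at `x` by `-2 x_u x_v`, so
by the Rayleigh principle `μ' ≥ μ - 2 x_u x_v`. The eigenvalue equations at `u` and `v` give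
`x_v ≤ μ x_u` and `x_u ≤ μ x_v`, hence `μ ≥ 1` and this lower bound is nonnegative.
Squaring, `μ'² ≥ μ² - 4 μ x_u x_v + 4 (x_u x_v)² > μ² - 1` because `4 μ x_u x_v ≤ 1`.
-/

open Matrix Finset

namespace Matrix

variable {ι : Type*} [Fintype ι] [DecidableEq ι]

theorem IsHermitian.dotProduct_mulVec_le_of_forall_hasEigenvalue_le {A : Matrix ι ι ℝ}
    (hA : A.IsHermitian) {μ : ℝ}
    (hμ : ∀ ν : ℝ, Module.End.HasEigenvalue A.mulVecLin ν → ν ≤ μ) (x : ι → ℝ) :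
    x ⬝ᵥ A *ᵥ x ≤ μ * (x ⬝ᵥ x) := by
  -- the eigenvalues of `μ - A` are the numbers `μ - ν` with `ν` an eigenvalue of `A`
  have hB : (algebraMap ℝ (Matrix ι ι ℝ) μ - A).PosSemidef := by
    have hB : (algebraMap ℝ (Matrix ι ι ℝ) μ - A).IsHermitian :=
      (isHermitian_diagonal _).sub hA
    refine hB.posSemidef_iff_eigenvalues_nonneg.mpr fun i ↦ ?_
    obtain ⟨s, rfl, ν, hν, hsν⟩ :=
      (spectrum.singleton_sub_eq A μ).symm ▸ hB.eigenvalues_mem_spectrum_real i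
    have hν : Module.End.HasEigenvalue A.mulVecLin ν :=
      Module.End.hasEigenvalue_iff_mem_spectrum.mpr (by rwa [← spectrum_toLin'] at hν)
    simpa [← hsν] using hμ ν hν
  have := hB.dotProduct_mulVec_nonneg x
  simp only [star_trivial, sub_mulVec, dotProduct_sub, Algebra.algebraMap_eq_smul_one,
    smul_mulVec, one_mulVec, dotProduct_smul, smul_eq_mul] at this
  linarith

end Matrix

namespace SimpleGraph

variable {V R : Type*} (G : SimpleGraph V) [DecidableRel G.Adj]

theorem adjMatrix_deleteEdges_singleton [DecidableEq V] [Ring R] {u v : V} (huv : G.Adj u v)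
    [DecidableRel (G.deleteEdges {s(u, v)}).Adj] :
    (G.deleteEdges {s(u, v)}).adjMatrix R =
      G.adjMatrix R - (single u v 1 + single v u 1) := by
  ext i j
  by_cases hij : s(i, j) = s(u, v)
  · rcases Sym2.eq_iff.mp hij with ⟨rfl, rfl⟩ | ⟨rfl, rfl⟩ <;>
      simp [huv, huv.symm, huv.ne, huv.ne.symm]
  · have h₁ : ¬(u = i ∧ v = j) := by rintro ⟨rfl, rfl⟩; exact hij rfl
    have h₂ : ¬(v = i ∧ u = j) := by rintro ⟨rfl, rfl⟩; exact hij Sym2.eq_swap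
    simp [adjMatrix_apply, hij, h₁, h₂]

theorem dotProduct_adjMatrix_deleteEdges_singleton_mulVec [Fintype V] [DecidableEq V]
    [CommRing R] {u v : V} (huv : G.Adj u v) [DecidableRel (G.deleteEdges {s(u, v)}).Adj]
    (x : V → R) :
    x ⬝ᵥ (G.deleteEdges {s(u, v)}).adjMatrix R *ᵥ x =
      x ⬝ᵥ G.adjMatrix R *ᵥ x - 2 * (x u * x v) := by
  rw [G.adjMatrix_deleteEdges_singleton huv, sub_mulVec, dotProduct_sub, add_mulVec,
    dotProduct_add, single_mulVec, single_mulVec]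
  simp only [dotProduct, one_mul, Function.update_apply, Pi.zero_apply, mul_ite, mul_zero,
    sum_ite_eq', mem_univ, if_true]
  ring

theorem le_mul_of_adjMatrix_mulVec_eq_smul [Fintype V] [CommSemiring R] [PartialOrder R]
    [IsOrderedAddMonoid R] {x : V → R} {μ : R} (hx₀ : ∀ i, 0 ≤ x i)
    (hx : G.adjMatrix R *ᵥ x = μ • x) {a b : V} (hab : G.Adj a b) : x b ≤ μ * x a := by
  rw [← smul_eq_mul, ← Pi.smul_apply, ← hx, adjMatrix_mulVec_apply]
  exact single_le_sum (fun i _ ↦ hx₀ i) ((G.mem_neighborFinset a b).mpr hab)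

theorem one_le_of_adj_of_adjMatrix_mulVec_eq_smul [Fintype V] {x : V → ℝ} {μ : ℝ}
    (hx₀ : ∀ i, 0 < x i) (hx : G.adjMatrix ℝ *ᵥ x = μ • x) {u v : V} (huv : G.Adj u v) :
    1 ≤ μ := by
  have hv := G.le_mul_of_adjMatrix_mulVec_eq_smul (fun i ↦ (hx₀ i).le) hx huv
  have hu := G.le_mul_of_adjMatrix_mulVec_eq_smul (fun i ↦ (hx₀ i).le) hx huv.symm
  nlinarith [hx₀ u, hx₀ v]

end SimpleGraph

open scoped Classical in
theorem claim3_general (n : ℕ) (G : SimpleGraph (Fin n)) [DecidableRel G.Adj] (μ μ' : ℝ)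
    (x : Fin n → ℝ) (hpos : ∀ i, 0 < x i)
    (hx : (G.adjMatrix ℝ).mulVec x = μ • x)
    (hunit : ∑ i, (x i) ^ 2 = 1)
    (u v : Fin n) (huv : G.Adj u v)
    (hsmall : x u * x v ≤ 1 / (4 * μ))
    (hμ' : IsSpecRad ((G.deleteEdges {s(u, v)}).adjMatrix ℝ) μ') :
    μ' ^ 2 > μ ^ 2 - 1 := by
  set t := x u * x v
  have ht : 0 < t := mul_pos (hpos u) (hpos v)
  have hμ : 1 ≤ μ := G.one_le_of_adj_of_adjMatrix_mulVec_eq_smul hpos hx huv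
  have hxx : x ⬝ᵥ x = 1 := by simpa [dotProduct, sq] using hunit
  have hrayleigh : μ - 2 * t ≤ μ' := by
    have := (G.deleteEdges {s(u, v)}).isHermitian_adjMatrix ℝ
      |>.dotProduct_mulVec_le_of_forall_hasEigenvalue_le hμ'.2 x
    rwa [G.dotProduct_adjMatrix_deleteEdges_singleton_mulVec huv, hx, dotProduct_smul,
      smul_eq_mul, hxx, mul_one, mul_one] at this
  have hsmall' : 4 * μ * t ≤ 1 := by rwa [le_div_iff₀ (by positivity), mul_comm] at hsmall
  calc μ ^ 2 - 1 < (μ - 2 * t) ^ 2 := by nlinarith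
    _ ≤ μ' ^ 2 := pow_le_pow_left₀ (by nlinarith) hrayleigh 2

open scoped Classical in
theorem claim3 (n : ℕ) (G : SimpleGraph (Fin n)) [DecidableRel G.Adj] (μ μ' : ℝ)
    (hμ : IsSpecRad (G.adjMatrix ℝ) μ)
    (x : Fin n → ℝ) (hpos : ∀ i, 0 < x i)
    (hx : (G.adjMatrix ℝ).mulVec x = μ • x)
    (hunit : ∑ i, (x i) ^ 2 = 1)
    (u v : Fin n) (huv : G.Adj u v)
    (hsmall : x u * x v ≤ 1 / (4 * μ))
    (hμ' : IsSpecRad ((G.deleteEdges {s(u, v)}).adjMatrix ℝ) μ') :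
    μ' ^ 2 > μ ^ 2 - 1 :=
  claim3_general n G μ μ' x hpos hx hunit u v huv hsmall hμ'
end

section
/- Let G be a graph of order n with no subgraph K_{2,k+1} for some k ≥ 1, and spectral radius μ. Then μ² − μ ≤ k(n−1). -/
/-!
Off the diagonal the entries of `A²` count common neighbours, so they are at most `k`; on the
diagonal they are the degrees. Hence `A² - A` is entrywise below `L + k·A(Kₙ)` (`L` the Laplacian),
a nonnegative matrix whose row sums are all `k(n - 1)`. Since `A` is symmetric and nonnegative, `μ`
has a nonnegative eigenvector `y`: the absolute value of any `μ`-eigenvector maximises the Rayleigh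
quotient as well. Reading `(A² - A) y = (μ² - μ) y` at a largest coordinate of `y` gives the bound.
-/
open Matrix Finset

namespace Matrix

variable {ι : Type*} [Fintype ι]

theorem dotProduct_mulVec_le_abs {A : Matrix ι ι ℝ} (hA : ∀ i j, 0 ≤ A i j) (x : ι → ℝ) :
    x ⬝ᵥ (A *ᵥ x) ≤ |x| ⬝ᵥ (A *ᵥ |x|) := by
  simp only [mulVec, dotProduct, Pi.abs_apply, mul_sum]
  refine sum_le_sum fun i _ => sum_le_sum fun j _ => ?_
  calc x i * (A i j * x j) = A i j * (x i * x j) := by ring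
    _ ≤ A i j * (|x i| * |x j|) :=
      mul_le_mul_of_nonneg_left ((le_abs_self _).trans (abs_mul _ _).le) (hA i j)
    _ = |x i| * (A i j * |x j|) := by ring

theorem le_of_mulVec_eq_smul {B C : Matrix ι ι ℝ} {y : ι → ℝ} {r s : ℝ}
    (hBy : B *ᵥ y = r • y) (hy0 : 0 ≤ y) (hy : y ≠ 0) (hBC : ∀ i j, B i j ≤ C i j)
    (hC : ∀ i j, 0 ≤ C i j) (hCs : ∀ i, ∑ j, C i j ≤ s) : r ≤ s := by
  obtain ⟨j, hj⟩ := Function.ne_iff.mp hy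
  obtain ⟨i, -, hi⟩ := exists_max_image univ y ⟨j, mem_univ j⟩
  have hyi : 0 < y i := ((hy0 j).lt_of_ne' hj).trans_le (hi j (mem_univ j))
  refine le_of_mul_le_mul_right ?_ hyi
  calc r * y i = ∑ j, B i j * y j := by simpa [mulVec, dotProduct] using (congrFun hBy i).symm
    _ ≤ ∑ j, C i j * y i := by
      refine sum_le_sum fun j _ => ?_
      exact (mul_le_mul_of_nonneg_right (hBC i j) (hy0 j)).trans
        (mul_le_mul_of_nonneg_left (hi j (mem_univ j)) (hC i j))
    _ ≤ s * y i := by rw [← sum_mul]; gcongr; exact hCs i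

end Matrix

namespace IsSpecRad

variable {n : ℕ} {A : Matrix (Fin n) (Fin n) ℝ} {μ : ℝ}

theorem posSemidef_smul_one_sub (hA : A.IsHermitian) (hμ : IsSpecRad A μ) :
    (μ • 1 - A).PosSemidef := by
  refine posSemidef_iff_isHermitian_and_spectrum_nonneg.mpr
    ⟨(isHermitian_one.smul (IsSelfAdjoint.all μ)).sub hA, fun a ha => ?_⟩
  rw [← spectrum_toLin', ← Module.End.hasEigenvalue_iff_mem_spectrum, map_sub, map_smul,
    toLin'_one, Module.End.hasEigenvalue_sub'_iff, toLin'_apply'] at ha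
  simpa using hμ.2 _ ha

theorem exists_nonneg_eigenvector (hA : A.IsHermitian) (hA0 : ∀ i j, 0 ≤ A i j)
    (hμ : IsSpecRad A μ) : ∃ y, 0 ≤ y ∧ y ≠ 0 ∧ A *ᵥ y = μ • y := by
  obtain ⟨x, hx, hx0⟩ := hμ.1.exists_hasEigenvector
  have hAx : A *ᵥ x = μ • x := by simpa using Module.End.mem_eigenspace_iff.mp hx
  have hM := hμ.posSemidef_smul_one_sub hA
  have hquad (u : Fin n → ℝ) : u ⬝ᵥ ((μ • 1 - A) *ᵥ u) = μ * (u ⬝ᵥ u) - u ⬝ᵥ (A *ᵥ u) := by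
    rw [sub_mulVec, smul_mulVec, one_mulVec, dotProduct_sub, dotProduct_smul, smul_eq_mul]
  have habs : |x| ⬝ᵥ |x| = x ⬝ᵥ x := by simp [dotProduct, abs_mul_abs_self]
  -- the Rayleigh quotient of `|x|` is at least that of `x`, which is already maximal
  have hzero : |x| ⬝ᵥ ((μ • 1 - A) *ᵥ |x|) = 0 := by
    refine le_antisymm ?_ (by simpa using hM.dotProduct_mulVec_nonneg |x|)
    have := dotProduct_mulVec_le_abs hA0 x
    rw [hquad, habs]
    rw [hAx, dotProduct_smul, smul_eq_mul] at this
    linarith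
  refine ⟨|x|, abs_nonneg x, by simpa using hx0, ?_⟩
  have := (hM.dotProduct_mulVec_zero_iff |x|).mp (by simpa using hzero)
  rw [sub_mulVec, smul_mulVec, one_mulVec, sub_eq_zero] at this
  exact this.symm

end IsSpecRad

namespace SimpleGraph

variable {V : Type*} (G : SimpleGraph V) [Fintype V] [DecidableEq V] [DecidableRel G.Adj]

theorem adjMatrix_mul_self_apply {α : Type*} [NonAssocSemiring α] (v w : V) :
    (G.adjMatrix α * G.adjMatrix α) v w = #(G.neighborFinset v ∩ G.neighborFinset w) := by
  simp only [adjMatrix_mul_apply, adjMatrix_apply, sum_boole]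
  congr 2
  ext u
  simp [adj_comm]

theorem card_neighborFinset_inter_lt_of_free {β : Type*} [Fintype β]
    (hfree : ¬ ∃ f : completeBipartiteGraph (Fin 2) β →g G, Function.Injective f)
    {v w : V} (hvw : v ≠ w) : #(G.neighborFinset v ∩ G.neighborFinset w) < Fintype.card β := by
  by_contra! h
  obtain ⟨g, hg⟩ := Function.Embedding.exists_of_card_le_finset h
  have hadj (b : β) : G.Adj v (g b) ∧ G.Adj w (g b) := by
    simpa using hg (Set.mem_range_self b)
  refine hfree ⟨⟨Sum.elim ![v, w] g, ?_⟩, ?_⟩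
  · rintro (a | a) (b | b) hab
    · simp at hab
    · fin_cases a
      exacts [(hadj b).1, (hadj b).2]
    · fin_cases b
      exacts [(hadj a).1.symm, (hadj a).2.symm]
    · simp at hab
  · refine (injective_pair_iff_ne.mpr hvw).sumElim g.injective fun a b => ?_
    fin_cases a
    exacts [G.ne_of_adj (hadj b).1, G.ne_of_adj (hadj b).2]

theorem adjMatrix_mul_self_apply_le_of_free {k : ℕ}
    (hfree : ¬ ∃ f : completeBipartiteGraph (Fin 2) (Fin (k + 1)) →g G, Function.Injective f)
    (v w : V) :
    (G.adjMatrix ℝ * G.adjMatrix ℝ) v w ≤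
      (G.degMatrix ℝ + (k : ℝ) • (⊤ : SimpleGraph V).adjMatrix ℝ) v w := by
  rcases eq_or_ne v w with rfl | hvw
  · rw [adjMatrix_mul_self_apply_self]
    simp [degMatrix]
  · have := G.card_neighborFinset_inter_lt_of_free hfree hvw
    rw [adjMatrix_mul_self_apply]
    simp only [Matrix.add_apply, degMatrix, diagonal_apply_ne _ hvw, Matrix.smul_apply,
      adjMatrix_apply, top_adj, if_pos hvw]
    simp only [Fintype.card_fin, Nat.lt_succ_iff] at this
    simpa using (Nat.cast_le (α := ℝ)).mpr this

theorem smul_adjMatrix_top_add_lapMatrix_apply_nonneg {c : ℝ} (hc : 1 ≤ c) (v w : V) :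
    0 ≤ (c • (⊤ : SimpleGraph V).adjMatrix ℝ + G.lapMatrix ℝ) v w := by
  rcases eq_or_ne v w with rfl | hvw
  · simp [lapMatrix, degMatrix]
  · simp only [Matrix.add_apply, Matrix.smul_apply, lapMatrix, Matrix.sub_apply, degMatrix,
      diagonal_apply_ne _ hvw, adjMatrix_apply, top_adj, if_pos hvw]
    split_ifs <;> simp <;> linarith

theorem sum_smul_adjMatrix_top_add_lapMatrix_apply (c : ℝ) (v : V) :
    ∑ w, (c • (⊤ : SimpleGraph V).adjMatrix ℝ + G.lapMatrix ℝ) v w =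
      c * (Fintype.card V - 1) := by
  have hlap := congrFun (G.lapMatrix_mulVec_const_eq_zero (R := ℝ)) v
  simp only [mulVec, dotProduct, mul_one, Pi.zero_apply] at hlap
  have htop : ∑ w, (⊤ : SimpleGraph V).adjMatrix ℝ v w = Fintype.card V - 1 := by
    have : Nonempty V := ⟨v⟩
    rw [← Nat.cast_one, ← Nat.cast_sub Fintype.card_pos, ← complete_graph_degree v,
      degree_eq_sum_if_adj]
    simp [adjMatrix_apply]
  simp only [Matrix.add_apply, Matrix.smul_apply, sum_add_distrib, hlap, smul_eq_mul, ← mul_sum,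
    htop, add_zero]

end SimpleGraph

theorem K2k_free_spectral (n k : ℕ) (hk : 1 ≤ k)
    (G : SimpleGraph (Fin n)) [DecidableRel G.Adj] (μ : ℝ)
    (hfree : ¬ ∃ f : completeBipartiteGraph (Fin 2) (Fin (k + 1)) →g G,
      Function.Injective f)
    (hμ : IsSpecRad (G.adjMatrix ℝ) μ) :
    μ ^ 2 - μ ≤ k * ((n : ℝ) - 1) := by
  obtain ⟨y, hy0, hy, hAy⟩ := hμ.exists_nonneg_eigenvector (G.isHermitian_adjMatrix (R := ℝ))
    fun v w => by rw [SimpleGraph.adjMatrix_apply]; split_ifs <;> norm_num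
  set A := G.adjMatrix ℝ
  have hBy : (A * A - A) *ᵥ y = (μ ^ 2 - μ) • y := by
    rw [sub_mulVec, ← mulVec_mulVec, hAy, mulVec_smul, hAy, smul_smul, sub_smul, sq]
  refine le_of_mulVec_eq_smul hBy hy0 hy
    (C := (k : ℝ) • (⊤ : SimpleGraph (Fin n)).adjMatrix ℝ + G.lapMatrix ℝ) (fun v w => ?_)
    (G.smul_adjMatrix_top_add_lapMatrix_apply_nonneg (by exact_mod_cast hk))
    (fun v => (G.sum_smul_adjMatrix_top_add_lapMatrix_apply _ v).le.trans (by simp))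
  have hA2 := G.adjMatrix_mul_self_apply_le_of_free hfree v w
  simp only [Matrix.sub_apply, Matrix.add_apply, SimpleGraph.lapMatrix] at hA2 ⊢
  linarith
end
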